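/- arXiv:2604.01162 — 2 statements merged into one kernel-verified Lean document; each statement's English description precedes it below -/
import Mathlib

section
/- Let N ≥ 2 and for each n ≥ 1 let ξ_n ∈ (0,1) be the unique number satisfying ∫₀^{ξ_n} exp(n·y·(y^{1/(N-1)} − 1)) dy = ∫_{ξ_n}^1 exp(n·y·(y^{1/(N-1)} − 1)) dy. Then ξ_n ≥ ((N-1)/N)^{N-1}. -/
open MeasureTheory Real

/-- Core scalar inequality: for `s ∈ [0,1]`, `p ∈ [0,1]`,
`(1-s)*(1+s)^p ≤ 1 - s^(1+p)`. -/
lemma stmt_2_core {s p : ℝ} (hs0 : 0 ≤ s) (hs1 : s ≤ 1) (hp0 : 0 ≤ p) (hp1 : p ≤ 1) :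
    (1 - s) * (1 + s) ^ p ≤ 1 - s ^ (1 + p) := by
  have hb1 : (1 + s) ^ p ≤ 1 + p * s :=
    rpow_one_add_le_one_add_mul_self (by linarith) hp0 hp1
  have hb2 : s ^ p ≤ 1 + p * (s - 1) := by
    have := rpow_one_add_le_one_add_mul_self (s := s - 1) (by linarith) hp0 hp1
    simpa using this
  have hsplit : s ^ (1 + p) = s * s ^ p := by
    rcases eq_or_lt_of_le hs0 with h | h
    · rcases eq_or_lt_of_le hp0 with hp | hp
      · simp [← h, ← hp, Real.rpow_one]
      · rw [← h]
        rw [Real.zero_rpow (by positivity), Real.zero_rpow (ne_of_gt hp)]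
        ring
    · rw [Real.rpow_add h, Real.rpow_one]
  have h1 : (1 - s) * (1 + s) ^ p ≤ (1 - s) * (1 + p * s) := by
    apply mul_le_mul_of_nonneg_left hb1 (by linarith)
  have h2 : s * s ^ p ≤ s * (1 + p * (s - 1)) := mul_le_mul_of_nonneg_left hb2 hs0
  rw [hsplit]
  nlinarith [h1, h2]

/-- Pointwise inequality: for `u ∈ [0, 1/2]` and `p ∈ (0,1]`,
`u^(1+p) - u ≤ (1-u)^(1+p) - (1-u)`. -/
lemma stmt_2_pointwise {u p : ℝ} (hu0 : 0 ≤ u) (hu : u ≤ 1/2) (hp0 : 0 < p) (hp1 : p ≤ 1) :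
    u * (u ^ p - 1) ≤ (1 - u) * ((1 - u) ^ p - 1) := by
  set b : ℝ := 1 - u with hb
  have hbpos : 0 < b := by simp only [hb]; linarith
  have hub : u ≤ b := by simp only [hb]; linarith
  set s : ℝ := u / b with hs
  have hs0 : 0 ≤ s := div_nonneg hu0 hbpos.le
  have hs1 : s ≤ 1 := (div_le_one hbpos).mpr hub
  have hu_eq : u = s * b := by rw [hs]; field_simp
  have hcore : (1 - s) * (1 + s) ^ p ≤ 1 - s ^ (1 + p) :=
    stmt_2_core hs0 hs1 hp0.le hp1
  -- multiply by b^(1+p)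
  have hbp : (0:ℝ) < b ^ (1 + p) := Real.rpow_pos_of_pos hbpos _
  have hmul : b ^ (1 + p) * ((1 - s) * (1 + s) ^ p) ≤ b ^ (1 + p) * (1 - s ^ (1 + p)) :=
    mul_le_mul_of_nonneg_left hcore hbp.le
  have hbsplit : b ^ (1 + p) = b * b ^ p := by
    rw [Real.rpow_add hbpos, Real.rpow_one]
  have hlhs : b ^ (1 + p) * ((1 - s) * (1 + s) ^ p) = (b - u) * (b + u) ^ p := by
    rw [hbsplit]
    have h1 : b * (1 - s) = b - u := by rw [hu_eq]; ring
    have h2 : b ^ p * (1 + s) ^ p = (b + u) ^ p := by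
      rw [← Real.mul_rpow hbpos.le (by linarith)]
      congr 1
      rw [hu_eq]; ring
    calc b * b ^ p * ((1 - s) * (1 + s) ^ p)
        = (b * (1 - s)) * (b ^ p * (1 + s) ^ p) := by ring
      _ = (b - u) * (b + u) ^ p := by rw [h1, h2]
  have hrhs : b ^ (1 + p) * (1 - s ^ (1 + p)) = b ^ (1 + p) - u ^ (1 + p) := by
    have : u ^ (1 + p) = s ^ (1 + p) * b ^ (1 + p) := by
      rw [hu_eq, Real.mul_rpow hs0 hbpos.le]
    rw [this]; ring
  rw [hlhs, hrhs] at hmul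
  have hbu : b + u = 1 := by simp [hb]
  rw [hbu, Real.one_rpow, mul_one] at hmul
  -- hmul : b - u ≤ b^(1+p) - u^(1+p)
  have husplit : u ^ (1 + p) = u * u ^ p := by
    rcases eq_or_lt_of_le hu0 with h | h
    · rw [← h, Real.zero_rpow (by positivity), zero_mul]
    · rw [Real.rpow_add h, Real.rpow_one]
  rw [husplit, hbsplit] at hmul
  nlinarith [hmul]

/-- `((N-1)/N)^(N-1) ≤ 1/2` for `N ≥ 2`. -/
lemma stmt_2_half (N : ℕ) (hN : 2 ≤ N) : (((N:ℝ)-1)/(N:ℝ))^(N-1) ≤ 1/2 := by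
  set M : ℕ := N - 1 with hM
  have hM1 : 1 ≤ M := by omega
  have hMR : (1:ℝ) ≤ (M:ℝ) := by exact_mod_cast hM1
  have hNM : (N:ℝ) = (M:ℝ) + 1 := by
    have : N = M + 1 := by omega
    rw [this]; push_cast; ring
  have hMpos : (0:ℝ) < (M:ℝ) := by linarith
  have hNpos : (0:ℝ) < (N:ℝ) := by rw [hNM]; linarith
  have hbern : (2:ℝ) ≤ (1 + 1/(M:ℝ))^M := by
    have hnn : (0:ℝ) ≤ 1/(M:ℝ) := by positivity
    have h := one_add_mul_le_pow (a := 1/(M:ℝ)) (by linarith) M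
    have h2 : (1:ℝ) + (M:ℝ) * (1/(M:ℝ)) = 2 := by
      rw [mul_one_div, div_self (ne_of_gt hMpos)]; norm_num
    linarith
  have hprod : (((N:ℝ)-1)/(N:ℝ))^M * (1 + 1/(M:ℝ))^M = 1 := by
    rw [← mul_pow]
    have : ((N:ℝ)-1)/(N:ℝ) * (1 + 1/(M:ℝ)) = 1 := by
      rw [hNM]; field_simp; ring
    rw [this, one_pow]
  have hpos : (0:ℝ) < (((N:ℝ)-1)/(N:ℝ))^M := by
    apply pow_pos
    apply div_pos (by linarith [hNM]) hNpos
  nlinarith [hprod, hbern, hpos]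

/-- Let `N ≥ 2`, `n ≥ 1`, and let `ξ ∈ (0,1)` satisfy
`∫₀^ξ exp(n·y·(y^{1/(N-1)} − 1)) dy = ∫_ξ^1 exp(n·y·(y^{1/(N-1)} − 1)) dy`.
Then `ξ ≥ ((N-1)/N)^{N-1}`. -/
theorem stmt_2 (N : ℕ) (hN : 2 ≤ N) (n : ℕ) (hn : 1 ≤ n) (ξ : ℝ)
    (hξ : ξ ∈ Set.Ioo (0:ℝ) 1)
    (heq : (∫ y in (0:ℝ)..ξ, Real.exp (n * y * (y ^ ((1:ℝ)/((N:ℝ)-1)) - 1))) =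
           ∫ y in ξ..(1:ℝ), Real.exp (n * y * (y ^ ((1:ℝ)/((N:ℝ)-1)) - 1))) :
    (((N:ℝ)-1)/(N:ℝ))^(N-1) ≤ ξ := by
  have half := stmt_2_half N hN
  obtain ⟨hξ0, hξ1⟩ := hξ
  -- it suffices to show 1/2 ≤ ξ
  suffices h : (1:ℝ)/2 ≤ ξ by linarith
  by_contra hlt
  push_neg at hlt
  set p : ℝ := (1:ℝ)/((N:ℝ)-1) with hp
  have hN1 : (1:ℝ) ≤ (N:ℝ) - 1 := by
    have : (2:ℝ) ≤ (N:ℝ) := by exact_mod_cast hN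
    linarith
  have hp0 : 0 < p := by rw [hp]; positivity
  have hp1 : p ≤ 1 := by
    rw [hp]; rw [div_le_one (by linarith)]; exact hN1
  set f : ℝ → ℝ := fun y => Real.exp (n * y * (y ^ p - 1)) with hf
  have hcont : Continuous f := by
    apply Real.continuous_exp.comp
    apply Continuous.mul
    · exact continuous_const.mul continuous_id
    · apply Continuous.sub _ continuous_const
      rw [continuous_iff_continuousAt]
      intro x
      exact Real.continuousAt_rpow_const x p (Or.inr hp0.le)
  have hint : ∀ a b : ℝ, IntervalIntegrable f volume a b := fun a b =>
    hcont.intervalIntegrable a b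
  -- split the right integral at 1 - ξ
  have hsplit : (∫ y in ξ..(1-ξ), f y) + (∫ y in (1-ξ)..(1:ℝ), f y) = ∫ y in ξ..(1:ℝ), f y :=
    intervalIntegral.integral_add_adjacent_intervals (hint _ _) (hint _ _)
  -- substitution: ∫_{1-ξ}^1 f = ∫_0^ξ f(1-u)
  have hsub : (∫ u in (0:ℝ)..ξ, f (1 - u)) = ∫ y in (1-ξ)..(1:ℝ), f y := by
    have := intervalIntegral.integral_comp_sub_left (a := (0:ℝ)) (b := ξ) f 1
    simpa using this
  -- pointwise comparison on [0, ξ]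
  have hmono : (∫ u in (0:ℝ)..ξ, f u) ≤ ∫ u in (0:ℝ)..ξ, f (1 - u) := by
    apply intervalIntegral.integral_mono_on hξ0.le (hint _ _)
      ((hcont.comp (continuous_const.sub continuous_id)).intervalIntegrable _ _)
    intro u hu
    obtain ⟨hu0, hu2⟩ := hu
    have huh : u ≤ 1/2 := le_trans hu2 hlt.le
    apply Real.exp_le_exp.mpr
    have key := stmt_2_pointwise hu0 huh hp0 hp1
    have hnn : (0:ℝ) ≤ (n:ℝ) := Nat.cast_nonneg n
    calc (n:ℝ) * u * (u ^ p - 1) = (n:ℝ) * (u * (u ^ p - 1)) := by ring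
      _ ≤ (n:ℝ) * ((1-u) * ((1-u) ^ p - 1)) := mul_le_mul_of_nonneg_left key hnn
      _ = (n:ℝ) * (1-u) * ((1-u) ^ p - 1) := by ring
  -- the middle integral is positive
  have hmid : 0 < ∫ y in ξ..(1-ξ), f y := by
    apply intervalIntegral.intervalIntegral_pos_of_pos (hint _ _) (fun x => Real.exp_pos _)
    linarith
  -- derive contradiction
  have : (∫ y in (0:ℝ)..ξ, f y) = ∫ y in ξ..(1:ℝ), f y := heq
  rw [← hsplit] at this
  rw [← hsub] at this
  linarith [hmono, hmid, this]
end

section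
/- Let N ≥ 2, s ∈ (0, 1/N), δ_n = s·(ln n)/n, and let (A_n) ⊂ (0,∞) satisfy (A_n+1)/A_n = exp(∑_{k=1}^{N-1} 1/((N-k)(A_n+1)^{N-k}))·n^{−s/(N-1)}·exp(n·(1 − (1−δ_n)^N)/(N-1)) for all large n. Then A_n·n^s → e^{−(1+1/2+⋯+1/(N-1))} as n → ∞. -/
open Real Filter

/-- For `δ ∈ [0,1]`, `(1-δ)^n ≤ 1 - nδ + n²δ²`. -/
lemma stmt_15_aux_pow_le (n : ℕ) {δ : ℝ} (h0 : 0 ≤ δ) (h1 : δ ≤ 1) :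
    (1 - δ) ^ n ≤ 1 - n * δ + (n : ℝ) ^ 2 * δ ^ 2 := by
  induction n with
  | zero => simp
  | succ m ih =>
    have h2 : (0 : ℝ) ≤ 1 - δ := by linarith
    have h4 : (1 - δ) ^ m * (1 - δ) ≤ (1 - m * δ + (m : ℝ) ^ 2 * δ ^ 2) * (1 - δ) :=
      mul_le_mul_of_nonneg_right ih h2
    have h5 : (1 - δ) ^ (m + 1) = (1 - δ) ^ m * (1 - δ) := pow_succ _ _
    have hm : (0 : ℝ) ≤ (m : ℝ) := Nat.cast_nonneg m
    push_cast
    nlinarith [sq_nonneg δ, sq_nonneg ((m : ℝ) * δ), mul_nonneg (mul_nonneg hm hm) (mul_nonneg (mul_nonneg h0 h0) h0)]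

/-- Let `N ≥ 2`, `s ∈ (0,1/N)`, `δ_n = s ln n/n`, and let `(A_n) ⊂ (0,∞)` satisfy
`(A_n+1)/A_n = exp(∑_{k=1}^{N-1} 1/((N-k)(A_n+1)^{N-k})) n^{−s/(N-1)} exp(n(1−(1−δ_n)^N)/(N-1))`
for all large `n`. Then `A_n n^s → e^{−(1+1/2+⋯+1/(N-1))}`. -/
theorem stmt_15 (N : ℕ) (hN : 2 ≤ N) (s : ℝ) (hs : s ∈ Set.Ioo (0:ℝ) (1/(N:ℝ)))
    (A : ℕ → ℝ) (hApos : ∀ n, 0 < A n)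
    (heq : ∀ᶠ n : ℕ in atTop,
      (A n + 1) / A n =
        Real.exp (∑ k ∈ Finset.Icc 1 (N-1), 1/(((N:ℝ)-(k:ℝ)) * (A n + 1)^(N-k))) *
        (n:ℝ) ^ (-s/((N:ℝ)-1)) *
        Real.exp ((n:ℝ) * (1 - (1 - s * Real.log n / n)^N) / ((N:ℝ)-1))) :
    Tendsto (fun n : ℕ => A n * (n:ℝ) ^ s) atTop
      (nhds (Real.exp (-(∑ k ∈ Finset.Icc 1 (N-1), 1/(k:ℝ))))) := by
  obtain ⟨hs0, hs1⟩ := hs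
  have hN2 : (2:ℝ) ≤ (N:ℝ) := by exact_mod_cast hN
  have hNm1 : (0:ℝ) < (N:ℝ) - 1 := by linarith
  set δ : ℕ → ℝ := fun n => s * Real.log n / n with hδdef
  set r : ℕ → ℝ := fun n => (1 - δ n) ^ N - (1 - (N:ℝ) * δ n) with hrdef
  set S : ℕ → ℝ := fun n =>
    ∑ k ∈ Finset.Icc 1 (N-1), 1/(((N:ℝ)-(k:ℝ)) * (A n + 1)^(N-k)) with hSdef
  -- δ n → 0
  have hδ0 : Tendsto δ atTop (nhds 0) := by
    have h1 : Tendsto (fun x : ℝ => Real.log x ^ 1 / (1 * x + 0)) atTop (nhds 0) :=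
      Real.tendsto_pow_log_div_mul_add_atTop 1 0 1 one_ne_zero
    have h2 : Tendsto (fun n : ℕ => Real.log n / n) atTop (nhds 0) := by
      have := h1.comp tendsto_natCast_atTop_atTop (α := ℕ)
      simpa [Function.comp_def] using this
    have := h2.const_mul s
    simpa [hδdef, mul_div_assoc] using this
  -- eventual bounds for δ
  have hδev : ∀ᶠ n : ℕ in atTop, 0 ≤ δ n ∧ δ n ≤ 1 := by
    have h1 : ∀ᶠ n : ℕ in atTop, δ n < 1 := hδ0.eventually (eventually_lt_nhds zero_lt_one)
    filter_upwards [h1, eventually_ge_atTop 1] with n hn hn1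
    have hn0 : (0:ℝ) < n := by exact_mod_cast hn1
    have : 0 ≤ Real.log n := Real.log_nonneg (by exact_mod_cast hn1)
    constructor
    · exact div_nonneg (mul_nonneg hs0.le this) hn0.le
    · linarith
  -- n * r n → 0
  have hnr : Tendsto (fun n : ℕ => (n:ℝ) * r n) atTop (nhds 0) := by
    have hub : Tendsto (fun n : ℕ => (N:ℝ)^2 * s^2 * (Real.log n ^ 2 / n)) atTop (nhds 0) := by
      have h1 : Tendsto (fun x : ℝ => Real.log x ^ 2 / (1 * x + 0)) atTop (nhds 0) :=
        Real.tendsto_pow_log_div_mul_add_atTop 1 0 2 one_ne_zero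
      have h2 := (h1.comp tendsto_natCast_atTop_atTop (α := ℕ)).const_mul ((N:ℝ)^2 * s^2)
      simpa using h2
    apply squeeze_zero' ?_ ?_ hub
    · filter_upwards [hδev] with n ⟨h0, h1⟩
      have hb : 1 + (N:ℝ) * (-δ n) ≤ (1 + -δ n) ^ N := one_add_mul_le_pow (by linarith) N
      have : 0 ≤ r n := by
        simp only [hrdef]
        have h2 : (1 + -δ n) = (1 - δ n) := by ring
        rw [h2] at hb
        nlinarith [hb]
      positivity
    · filter_upwards [hδev, eventually_ge_atTop 1] with n ⟨h0, h1⟩ hn1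
      have hn0 : (0:ℝ) < n := by exact_mod_cast hn1
      have hub2 : r n ≤ (N:ℝ)^2 * δ n ^ 2 := by
        have := stmt_15_aux_pow_le N h0 h1
        simp only [hrdef]; linarith
      have hδval : δ n = s * Real.log n / n := rfl
      calc (n:ℝ) * r n ≤ (n:ℝ) * ((N:ℝ)^2 * δ n ^ 2) := by
            exact mul_le_mul_of_nonneg_left hub2 hn0.le
        _ = (N:ℝ)^2 * s^2 * (Real.log n ^ 2 / n) := by
            rw [hδval]; field_simp
  -- master identity
  have key : ∀ᶠ n : ℕ in atTop,
      A n * (n:ℝ) ^ s = (A n + 1) * Real.exp (-(S n)) * Real.exp ((n:ℝ) * r n / ((N:ℝ)-1)) := by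
    filter_upwards [heq, eventually_ge_atTop 1] with n hn hn1
    have hx : (0:ℝ) < (n:ℝ) := by exact_mod_cast hn1
    have hA := hApos n
    have hEq : A n + 1 =
        A n * (Real.exp (S n) * (n:ℝ) ^ (-s/((N:ℝ)-1)) *
          Real.exp ((n:ℝ) * (1 - (1 - δ n)^N) / ((N:ℝ)-1))) := by
      rw [mul_comm]
      exact (div_eq_iff hA.ne').mp hn
    have hrpow : (n:ℝ) ^ (-s/((N:ℝ)-1)) = Real.exp ((-s/((N:ℝ)-1)) * Real.log n) := by
      rw [Real.rpow_def_of_pos hx, mul_comm]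
    have hxs : (n:ℝ) ^ s = Real.exp (s * Real.log n) := by
      rw [Real.rpow_def_of_pos hx, mul_comm]
    have hδn : (n:ℝ) * δ n = s * Real.log n := by
      simp only [hδdef]; field_simp
    rw [hxs, hEq, hrpow, ← Real.exp_add, ← Real.exp_add, mul_assoc, mul_assoc, ← Real.exp_add,
      ← Real.exp_add]
    congr 1
    have hexpand : (n:ℝ) * r n = (n:ℝ) * ((1 - δ n) ^ N) - (n:ℝ) + (N:ℝ) * (s * Real.log n) := by
      simp only [hrdef]; rw [← hδn]; ring
    field_simp
    rw [Real.exp_eq_exp, hexpand, eq_div_iff hNm1.ne']; ring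
  -- A n → 0
  have hns : Tendsto (fun n : ℕ => (n:ℝ) ^ s) atTop atTop :=
    (tendsto_rpow_atTop hs0).comp tendsto_natCast_atTop_atTop
  have hexp1 : Tendsto (fun n : ℕ => Real.exp ((n:ℝ) * r n / ((N:ℝ)-1))) atTop (nhds 1) := by
    have h1 : Tendsto (fun n : ℕ => (n:ℝ) * r n / ((N:ℝ)-1)) atTop (nhds 0) := by
      simpa using hnr.div_const ((N:ℝ)-1)
    simpa [Function.comp_def] using (Real.continuous_exp.tendsto 0).comp h1
  have hSnonneg : ∀ n, 0 ≤ S n := by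
    intro n
    apply Finset.sum_nonneg
    intro k hk
    have hk2 : k ≤ N - 1 := (Finset.mem_Icc.mp hk).2
    have hkN : (k:ℝ) < (N:ℝ) := by
      have : k < N := by omega
      exact_mod_cast this
    have hA1 : (0:ℝ) < (A n + 1) ^ (N - k) := pow_pos (by linarith [hApos n]) _
    have : (0:ℝ) < ((N:ℝ)-(k:ℝ)) * (A n + 1) ^ (N - k) := mul_pos (by linarith) hA1
    positivity
  have hA0 : Tendsto A atTop (nhds 0) := by
    have hub : Tendsto (fun n : ℕ => 2 * ((n:ℝ) ^ s - 2)⁻¹) atTop (nhds 0) := by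
      have h1 : Tendsto (fun n : ℕ => (n:ℝ) ^ s - 2) atTop atTop :=
        tendsto_atTop_add_const_right _ _ hns
      simpa using (h1.inv_tendsto_atTop).const_mul 2
    apply squeeze_zero' (Eventually.of_forall fun n => (hApos n).le) ?_ hub
    have hexple : ∀ᶠ n : ℕ in atTop, Real.exp ((n:ℝ) * r n / ((N:ℝ)-1)) ≤ 2 :=
      hexp1.eventually (eventually_le_nhds (by norm_num : (1:ℝ) < 2))
    have hns4 : ∀ᶠ n : ℕ in atTop, (4:ℝ) ≤ (n:ℝ) ^ s := hns.eventually_ge_atTop 4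
    filter_upwards [key, hexple, hns4] with n hk he h4
    have hA := hApos n
    have hSle : Real.exp (-(S n)) ≤ 1 :=
      Real.exp_le_one_iff.mpr (neg_nonpos.mpr (hSnonneg n))
    have hexppos : 0 < Real.exp ((n:ℝ) * r n / ((N:ℝ)-1)) := Real.exp_pos _
    have h2 : A n * (n:ℝ) ^ s ≤ 2 * (A n + 1) := by
      calc A n * (n:ℝ) ^ s = (A n + 1) * Real.exp (-(S n)) * Real.exp ((n:ℝ) * r n / ((N:ℝ)-1)) := hk
        _ ≤ (A n + 1) * 1 * 2 := by
            apply mul_le_mul ?_ he hexppos.le (by positivity)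
            exact mul_le_mul_of_nonneg_left hSle (by linarith)
        _ = 2 * (A n + 1) := by ring
    have h3 : (0:ℝ) < (n:ℝ) ^ s - 2 := by linarith
    rw [show (2:ℝ) * ((n:ℝ) ^ s - 2)⁻¹ = 2 / ((n:ℝ) ^ s - 2) by ring, le_div_iff₀ h3]
    nlinarith
  -- limits of the pieces
  have hA1 : Tendsto (fun n => A n + 1) atTop (nhds 1) := by
    simpa using hA0.add tendsto_const_nhds
  have hS : Tendsto S atTop (nhds (∑ k ∈ Finset.Icc 1 (N-1), 1/((N:ℝ)-(k:ℝ)))) := by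
    apply tendsto_finset_sum
    intro k hk
    have hk2 : k ≤ N - 1 := (Finset.mem_Icc.mp hk).2
    have hkN : (k:ℝ) < (N:ℝ) := by
      have : k < N := by omega
      exact_mod_cast this
    have hpow : Tendsto (fun n => (A n + 1) ^ (N - k)) atTop (nhds 1) := by
      simpa using hA1.pow (N - k)
    have hne : ((N:ℝ) - (k:ℝ)) * 1 ≠ 0 := by
      rw [mul_one]; linarith
    have h2 : Tendsto (fun n => 1/(((N:ℝ)-(k:ℝ)) * (A n + 1)^(N-k))) atTop
        (nhds (1/(((N:ℝ)-(k:ℝ)) * 1))) :=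
      tendsto_const_nhds.div (tendsto_const_nhds.mul hpow) hne
    rw [mul_one] at h2
    exact h2
  have hexpS : Tendsto (fun n => Real.exp (-(S n))) atTop
      (nhds (Real.exp (-(∑ k ∈ Finset.Icc 1 (N-1), 1/((N:ℝ)-(k:ℝ)))))) :=
    (Real.continuous_exp.tendsto _).comp hS.neg
  have hsum : ∑ k ∈ Finset.Icc 1 (N-1), 1/((N:ℝ)-(k:ℝ)) = ∑ k ∈ Finset.Icc 1 (N-1), 1/(k:ℝ) := by
    refine Finset.sum_nbij' (fun k => N - k) (fun k => N - k) ?_ ?_ ?_ ?_ ?_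
    · intro a ha
      rw [Finset.mem_Icc] at ha
      simp only [Finset.mem_Icc]
      omega
    · intro a ha
      rw [Finset.mem_Icc] at ha
      simp only [Finset.mem_Icc]
      omega
    · intro a ha
      rw [Finset.mem_Icc] at ha
      omega
    · intro a ha
      rw [Finset.mem_Icc] at ha
      omega
    · intro a ha
      rw [Finset.mem_Icc] at ha
      have : ((N - a : ℕ) : ℝ) = (N:ℝ) - (a:ℝ) := by
        rw [Nat.cast_sub (by omega)]
      rw [this]
  have final : Tendsto
      (fun n => (A n + 1) * Real.exp (-(S n)) * Real.exp ((n:ℝ) * r n / ((N:ℝ)-1)))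
      atTop (nhds (Real.exp (-(∑ k ∈ Finset.Icc 1 (N-1), 1/(k:ℝ))))) := by
    have h := (hA1.mul hexpS).mul hexp1
    rw [one_mul, mul_one, hsum] at h
    exact h
  exact final.congr' (key.mono fun n h => h.symm)
end
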